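/- arXiv:1410.5856 — 5 statements merged into one kernel-verified Lean document; each statement's English description precedes it below -/
import Mathlib

section
/- Fix n ≥ 2 and 2 ≤ l ≤ n. Let F_l : Matrix (Fin n) (Fin n) ℝ → ℝ be the map sending A to the coefficient of t^l in det(I + tA). Let A = diag(λ_1, …, λ_n) be a diagonal matrix. Then the second Fréchet derivative of F_l at A, viewed as a bilinear form evaluated on matrix units, satisfies: D²F_l(A)(E_{ij}, E_{kl}) = σ_{l−2}(λ with the i-th and k-th entries deleted) if i = j, k = l and i ≠ k; D²F_l(A)(E_{ij}, E_{kl}) = −σ_{l−2}(λ with the i-th and j-th entries deleted) if i = l, j = k and i ≠ j; and D²F_l(A)(E_{ij}, E_{kl}) = 0 in all other cases. -/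
/-!
By the Leibniz formula, `F_l(A)` is a signed sum, over permutations `σ` and `l`-subsets `t`, of
the monomials `∏_{x ∈ t} A (σ x) x`, where the columns outside `t` contribute `1` or `0` according
as `σ` fixes them. The second derivative of such a monomial differentiates two of its factors.
At `diag λ` in the directions `E_ij`, `E_km`, a term survives only if the differentiated factors
are the columns `j ≠ m` of `t`, `σ j = i`, `σ m = k` and `σ` fixes every other index. Hence `σ`
is the identity or the transposition of `j` and `m` (the source of the sign), and the remaining
diagonal factors sum to `σ_{l-2}` of the `λ`s off `{j, m}`.
-/

/-- The `k`-th elementary symmetric polynomial of the entries of `lam` indexed by `s`. -/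
noncomputable def esymmOn {n : ℕ} (s : Finset (Fin n)) (k : ℕ) (lam : Fin n → ℝ) : ℝ :=
  ∑ t ∈ s.powersetCard k, ∏ i ∈ t, lam i

/-- `F_l(A)` : the coefficient of `t^l` in `det (I + t A)`. -/
noncomputable def detCoeff (n l : ℕ) (A : Matrix (Fin n) (Fin n) ℝ) : ℝ :=
  (Matrix.det ((1 : Matrix (Fin n) (Fin n) (Polynomial ℝ)) +
    A.map fun a => Polynomial.C a * Polynomial.X)).coeff l

attribute [local instance] Matrix.normedAddCommGroup Matrix.normedSpace

open Finset Polynomial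

theorem coeff_prod_C_mul_X_add_C {ι R : Type*} [CommSemiring R] [DecidableEq ι] (s : Finset ι)
    (a b : ι → R) (k : ℕ) :
    (∏ i ∈ s, (C (a i) * X + C (b i))).coeff k =
      ∑ t ∈ s.powersetCard k, (∏ i ∈ t, a i) * ∏ i ∈ s \ t, b i := by
  simp_rw [prod_add, finsetSum_coeff, prod_mul_distrib, prod_const, ← map_prod, coeff_mul_C,
    coeff_C_mul_X_pow, ite_mul, zero_mul, powersetCard_eq_filter, sum_filter, eq_comm (b := #_)]

theorem coeff_det_one_add_map_C_mul_X {ι R : Type*} [Fintype ι] [DecidableEq ι] [CommRing R]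
    (A : Matrix ι ι R) (l : ℕ) :
    (Matrix.det (1 + A.map fun a => C a * X)).coeff l =
      ∑ σ : Equiv.Perm ι, Equiv.Perm.sign σ • ∑ t ∈ univ.powersetCard l,
        (∏ i ∈ t, A (σ i) i) * ∏ i ∈ univ \ t, (if σ i = i then 1 else 0) := by
  have hentry : ∀ i j, (1 + A.map fun a => C a * X : Matrix ι ι R[X]) i j =
      C (A i j) * X + C (if i = j then 1 else 0) := by
    intro i j
    rw [add_comm, Matrix.add_apply, Matrix.map_apply, Matrix.one_apply, apply_ite C, map_one,
      map_zero]
  simp_rw [Matrix.det_apply, finsetSum_coeff, hentry, coeff_smul, coeff_prod_C_mul_X_add_C]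

section

variable {𝕜 E ι : Type*} [NontriviallyNormedField 𝕜] [NormedAddCommGroup E] [NormedSpace 𝕜 E]

theorem fderiv_fderiv_prod_clm_apply [DecidableEq ι] (L : ι → E →L[𝕜] 𝕜) (s : Finset ι)
    (x u v : E) :
    fderiv 𝕜 (fderiv 𝕜 fun y => ∏ i ∈ s, L i y) x u v =
      ∑ a ∈ s, ∑ b ∈ s.erase a, (∏ i ∈ (s.erase a).erase b, L i x) * L b u * L a v := by
  have hprod : ∀ t : Finset ι, ∀ y, HasFDerivAt (fun y => ∏ i ∈ t, L i y)
      (∑ a ∈ t, (∏ i ∈ t.erase a, L i y) • L a) y :=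
    fun t y => HasFDerivAt.finsetProd fun i _ => (L i).hasFDerivAt
  have hsecond : HasFDerivAt (fun y => ∑ a ∈ s, (∏ i ∈ s.erase a, L i y) • L a)
      (∑ a ∈ s, (∑ b ∈ s.erase a, (∏ i ∈ (s.erase a).erase b, L i x) • L b).smulRight (L a)) x :=
    HasFDerivAt.fun_sum fun a _ => (hprod _ x).smul_const (L a)
  rw [funext fun y => (hprod s y).fderiv, hsecond.fderiv]
  simp [sum_mul]

theorem fderiv_fderiv_sum_mul_apply (s : Finset ι) (c : ι → 𝕜) (f : ι → E → 𝕜)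
    (hf : ∀ i ∈ s, ContDiff 𝕜 2 (f i)) (x u v : E) :
    fderiv 𝕜 (fderiv 𝕜 fun y => ∑ i ∈ s, c i * f i y) x u v =
      ∑ i ∈ s, c i * fderiv 𝕜 (fderiv 𝕜 (f i)) x u v := by
  have hiter : ∀ g : E → 𝕜, fderiv 𝕜 (fderiv 𝕜 g) x u v = iteratedFDeriv 𝕜 2 g x ![u, v] :=
    fun g => (iteratedFDeriv_two_apply g x ![u, v]).symm
  simp_rw [hiter]
  rw [iteratedFDeriv_sum (f := fun i y => c i * f i y) fun i hi => contDiff_const.mul (hf i hi),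
    Finset.sum_apply, _root_.sum_apply]
  refine sum_congr rfl fun i hi => ?_
  rw [show (fun y => c i * f i y) = c i • f i from rfl,
    iteratedFDeriv_const_smul_apply (hf i hi).contDiffAt]
  rfl

end

theorem fderiv_fderiv_detCoeff_apply (n l : ℕ) (A B C : Matrix (Fin n) (Fin n) ℝ) :
    fderiv ℝ (fderiv ℝ (detCoeff n l)) A B C =
      ∑ σ : Equiv.Perm (Fin n), ∑ t ∈ univ.powersetCard l,
        (Equiv.Perm.sign σ : ℝ) * (∏ i ∈ univ \ t, if σ i = i then 1 else 0) *
          ∑ a ∈ t, ∑ b ∈ t.erase a,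
            (∏ i ∈ (t.erase a).erase b, A (σ i) i) * B (σ b) b * C (σ a) a := by
  let entry (σ : Equiv.Perm (Fin n)) (i : Fin n) : Matrix (Fin n) (Fin n) ℝ →L[ℝ] ℝ :=
    LinearMap.toContinuousLinearMap (Matrix.entryLinearMap ℝ ℝ (σ i) i)
  have hexp : detCoeff n l = fun A => ∑ p ∈ univ ×ˢ univ.powersetCard l,
      ((Equiv.Perm.sign p.1 : ℝ) * ∏ i ∈ univ \ p.2, if p.1 i = i then 1 else 0) *
        ∏ i ∈ p.2, entry p.1 i A := by
    funext A
    rw [detCoeff, coeff_det_one_add_map_C_mul_X, sum_product]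
    refine sum_congr rfl fun σ _ => ?_
    rw [Units.smul_def, zsmul_eq_mul, mul_sum]
    refine sum_congr rfl fun t _ => ?_
    simp only [entry, LinearMap.coe_toContinuousLinearMap', Matrix.entryLinearMap_apply]
    ring
  have hcd : ∀ p ∈ univ ×ˢ univ.powersetCard l,
      ContDiff ℝ 2 (fun A : Matrix (Fin n) (Fin n) ℝ => ∏ i ∈ p.2, entry p.1 i A) :=
    fun p _ => contDiff_prod fun i _ => (entry p.1 i).contDiff
  rw [hexp]
  -- `rw` cannot match here: the goal's `fderiv` carries the matrix topology, the lemma the norm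
  -- topology, which agree only up to unfolding.
  refine (fderiv_fderiv_sum_mul_apply _ _ _ hcd A B C).trans ?_
  rw [sum_product]
  exact sum_congr rfl fun σ _ => sum_congr rfl fun t _ =>
    congrArg _ (fderiv_fderiv_prod_clm_apply (entry σ) t A B C)

theorem sum_sum_erase_mul_single_mul_single {ι R : Type*} [DecidableEq ι] [CommSemiring R]
    (r : ι → ι) (t : Finset ι) (g : ι → ι → R) (i j k m : ι) :
    ∑ a ∈ t, ∑ b ∈ t.erase a,
        g a b * Matrix.single i j (1 : R) (r b) b * Matrix.single k m 1 (r a) a =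
      if m ∈ t ∧ r m = k ∧ j ∈ t.erase m ∧ r j = i then g m j else 0 := by
  have hsingle : ∀ (p q x y : ι), Matrix.single p q (1 : R) x y =
      if q = y then if p = x then 1 else 0 else 0 := by
    intro p q x y
    simp only [Matrix.single_apply, ← ite_and, and_comm]
  simp only [hsingle, mul_ite, mul_one, mul_zero, sum_ite_irrel, sum_const_zero, sum_ite_eq,
    ite_and, eq_comm (a := k), eq_comm (a := i)]

theorem prod_diagonal_apply_perm {ι R : Type*} [DecidableEq ι] [CommMonoidWithZero R] (d : ι → R)
    (σ : Equiv.Perm ι) (s : Finset ι) :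
    ∏ x ∈ s, Matrix.diagonal d (σ x) x = if ∀ x ∈ s, σ x = x then ∏ x ∈ s, d x else 0 := by
  rw [← prod_ite_zero]
  refine prod_congr rfl fun x _ => ?_
  rw [Matrix.diagonal_apply]
  split_ifs with h <;> simp [h]

namespace Equiv.Perm

variable {α : Type*} [DecidableEq α]

theorem eq_one_or_eq_swap_of_forall_apply_eq {σ : Perm α} {a b : α}
    (h : ∀ x, x ≠ a → x ≠ b → σ x = x) : σ = 1 ∨ σ = swap a b := by
  have hinj := @σ.injective.eq_iff
  have ha : σ a = a ∨ σ a = b := by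
    by_contra! h'
    exact h'.1 (σ.injective (h _ h'.1 h'.2))
  have hb : σ b = a ∨ σ b = b := by
    by_contra! h'
    exact h'.2 (σ.injective (h _ h'.1 h'.2))
  rcases ha with ha | ha
  · left; ext x; rw [one_apply]; grind
  · right; ext x; rw [swap_apply_def]; grind

-- The decidability instance is a parameter so that the lemma also rewrites sums elaborated over
-- `Fin n`, where `Nat.decidableForallFin` is found instead of `Fintype.decidableForallFintype`.
theorem sum_ite_forall_apply_eq_sign [Fintype α] {R : Type*} [Ring R] {a b : α} (hab : a ≠ b)
    (i k : α) [DecidablePred fun σ : Perm α => ∀ x, x ≠ a → x ≠ b → σ x = x] :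
    ∑ σ : Perm α, (if (∀ x, x ≠ a → x ≠ b → σ x = x) ∧ σ a = i ∧ σ b = k
      then (sign σ : R) else 0) =
      (if a = i ∧ b = k then 1 else 0) - (if b = i ∧ a = k then 1 else 0) := by
  have hfix : univ.filter (fun σ : Perm α => ∀ x, x ≠ a → x ≠ b → σ x = x) = {1, swap a b} := by
    ext σ
    simp only [mem_filter, mem_univ, true_and, mem_insert, mem_singleton]
    refine ⟨eq_one_or_eq_swap_of_forall_apply_eq, ?_⟩
    rintro (rfl | rfl)
    · simp
    · exact fun x hxa hxb => swap_apply_of_ne_of_ne hxa hxb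
  have hne : (1 : Perm α) ≠ swap a b := fun h => hab (by simpa using congrArg (· a) h)
  simp_rw [ite_and]
  rw [← sum_filter, hfix, sum_pair hne]
  simp only [one_apply, swap_apply_left, swap_apply_right, sign_one, sign_swap hab, Units.val_one,
    Units.val_neg, Int.cast_one, Int.cast_neg]
  split_ifs <;> simp

end Equiv.Perm

theorem sum_powersetCard_ite_subset {α M : Type*} [DecidableEq α] [AddCommMonoid M]
    (s t : Finset α) (n : ℕ) (hst : s ⊆ t) (hsn : #s ≤ n) (f : Finset α → M) :
    ∑ u ∈ t.powersetCard n, (if s ⊆ u then f (u \ s) else 0) =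
      ∑ v ∈ (t \ s).powersetCard (n - #s), f v := by
  have hcancel : ∀ v ∈ (t \ s).powersetCard (n - #s), (v ∪ s) \ s = v := fun v hv =>
    union_sdiff_cancel_right (disjoint_of_subset_left (mem_powersetCard.mp hv).1 sdiff_disjoint)
  rw [← sum_filter, filter_powersetCard_subset s t n hst hsn, sum_image]
  · exact sum_congr rfl fun v hv => congrArg f (hcancel v hv)
  · intro v hv w hw hvw
    rw [← hcancel v hv, ← hcancel w hw]
    exact congrArg (· \ s) hvw

theorem sum_powersetCard_ite_pair_subset_eq_esymmOn {n l : ℕ} (hl : 2 ≤ l) (lam : Fin n → ℝ)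
    {j m : Fin n} (hjm : j ≠ m) :
    ∑ t ∈ univ.powersetCard l, (if {j, m} ⊆ t then ∏ x ∈ t \ {j, m}, lam x else 0) =
      esymmOn ((univ.erase m).erase j) (l - 2) lam := by
  have hcard : #{j, m} = 2 := card_pair hjm
  have hset : (univ.erase m).erase j = univ \ {j, m} := by
    rw [sdiff_insert, sdiff_singleton_eq_erase]
  rw [esymmOn, hset, ← hcard]
  exact sum_powersetCard_ite_subset {j, m} univ l (subset_univ _) (hcard ▸ hl) (∏ x ∈ ·, lam x)

theorem fderiv_fderiv_detCoeff_diagonal_single (n l : ℕ) (lam : Fin n → ℝ) (i j k m : Fin n) :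
    fderiv ℝ (fderiv ℝ (detCoeff n l)) (Matrix.diagonal lam)
        (Matrix.single i j 1) (Matrix.single k m 1) =
      (∑ σ : Equiv.Perm (Fin n), if (∀ x, x ≠ j → x ≠ m → σ x = x) ∧ σ j = i ∧ σ m = k
        then (Equiv.Perm.sign σ : ℝ) else 0) *
      ∑ t ∈ univ.powersetCard l, if {j, m} ⊆ t ∧ j ≠ m then ∏ x ∈ t \ {j, m}, lam x else 0 := by
  rw [fderiv_fderiv_detCoeff_apply, sum_mul_sum]
  refine sum_congr rfl fun σ _ => sum_congr rfl fun t _ => ?_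
  rw [sum_sum_erase_mul_single_mul_single, prod_diagonal_apply_perm, prod_ite_zero, prod_const_one,
    sdiff_insert, sdiff_singleton_eq_erase]
  by_cases hjm : {j, m} ⊆ t ∧ j ≠ m
  · have hfix : ((∀ x ∈ univ \ t, σ x = x) ∧ ∀ x ∈ (t.erase m).erase j, σ x = x) ↔
        ∀ x, x ≠ j → x ≠ m → σ x = x := by
      simp only [mem_sdiff, mem_univ, true_and, mem_erase]
      grind [insert_subset_iff]
    have hmt : m ∈ t := hjm.1 (by simp)
    have hjt : j ∈ t.erase m := mem_erase.mpr ⟨hjm.2, hjm.1 (by simp)⟩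
    rw [if_pos hjm]
    simp only [← hfix, hmt, hjt, true_and]
    split_ifs <;> simp_all
  · have hcond : ¬(m ∈ t ∧ σ m = k ∧ j ∈ t.erase m ∧ σ j = i) := fun h =>
      hjm ⟨insert_subset_iff.mpr ⟨(mem_erase.mp h.2.2.1).2, by simpa using h.1⟩,
        (mem_erase.mp h.2.2.1).1⟩
    rw [if_neg hcond, if_neg hjm, mul_zero, mul_zero]

theorem fderiv2_detCoeff_diagonal_general (n l : ℕ) (hl : 2 ≤ l)
    (lam : Fin n → ℝ) (i j k m : Fin n) :
    fderiv ℝ (fderiv ℝ (detCoeff n l)) (Matrix.diagonal lam)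
        (Matrix.single i j 1) (Matrix.single k m 1) =
      if i = j ∧ k = m ∧ i ≠ k then
        esymmOn ((Finset.univ.erase i).erase k) (l - 2) lam
      else if i = m ∧ j = k ∧ i ≠ j then
        -esymmOn ((Finset.univ.erase i).erase j) (l - 2) lam
      else 0 := by
  rw [fderiv_fderiv_detCoeff_diagonal_single]
  by_cases hjm : j = m
  · subst hjm
    rw [if_neg (by grind), if_neg (by grind)]
    simp
  simp only [ne_eq, hjm, not_false_eq_true, and_true]
  rw [Equiv.Perm.sum_ite_forall_apply_eq_sign hjm,
    sum_powersetCard_ite_pair_subset_eq_esymmOn hl lam hjm]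
  by_cases hdiag : i = j ∧ k = m ∧ i ≠ k
  · obtain ⟨rfl, rfl, hik⟩ := hdiag
    simp [hik, hik.symm, erase_right_comm]
  by_cases hswap : i = m ∧ j = k ∧ i ≠ j
  · obtain ⟨rfl, rfl, hij⟩ := hswap
    simp [hij, hij.symm]
  rw [if_neg hdiag, if_neg hswap, if_neg (by grind), if_neg (by grind), sub_zero, zero_mul]

/-- The second Fréchet derivative of `F_l` at a diagonal matrix `diag(λ)`, viewed as a
bilinear form and evaluated on matrix units `E_{ij}`, `E_{km}`:
it equals `σ_{l-2}(λ with the i-th and k-th entries deleted)` if `i = j`, `k = m`, `i ≠ k`;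
it equals `-σ_{l-2}(λ with the i-th and j-th entries deleted)` if `i = m`, `j = k`, `i ≠ j`;
and it equals `0` in all other cases. -/
theorem fderiv2_detCoeff_diagonal (n l : ℕ) (hn : 2 ≤ n) (hl : 2 ≤ l) (hln : l ≤ n)
    (lam : Fin n → ℝ) (i j k m : Fin n) :
    fderiv ℝ (fderiv ℝ (detCoeff n l)) (Matrix.diagonal lam)
        (Matrix.single i j 1) (Matrix.single k m 1) =
      if i = j ∧ k = m ∧ i ≠ k then
        esymmOn ((Finset.univ.erase i).erase k) (l - 2) lam
      else if i = m ∧ j = k ∧ i ≠ j then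
        -esymmOn ((Finset.univ.erase i).erase j) (l - 2) lam
      else 0 :=
  fderiv2_detCoeff_diagonal_general n l hl lam i j k m
end

section
/- Let n ≥ 2, let λ ∈ ℝ^n lie in the Gårding cone Γ₂ (σ₁(λ) > 0 and σ₂(λ) > 0), and let v ∈ ℝ^n be arbitrary. Then 2 σ₂(λ) · Σ_{i≠j} v_i v_j ≤ (Σ_i (σ₁(λ) − λ_i) v_i)². Equivalently, −Σ_{i≠j} v_i v_j ≥ −(Σ_i σ₂^{ii}(λ) v_i)² / (2σ₂(λ)) where σ₂^{ii}(λ) = σ₁(λ) − λ_i. -/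
/-! The identities `2 σ₂(λ) = B(λ, λ)`, `∑_{i≠j} v_i v_j = B(v, v)` and
`∑_i (σ₁(λ) - λ_i) v_i = B(λ, v)`, for the symmetric bilinear form `B(x, y) = ∑_{i≠j} x_i y_j`,
turn the inequality into the reverse Cauchy–Schwarz inequality `B(λ, λ) B(v, v) ≤ B(λ, v)²` at a
vector with `B(λ, λ) > 0`. The form `B` has Lorentzian signature: it is negative semidefinite on
the `B`-orthogonal complement of any such `λ`, by the ordinary Cauchy–Schwarz inequality, and
reverse Cauchy–Schwarz follows by testing `B` on the orthogonal vector `B(λ, λ) v - B(λ, v) λ`. -/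

/-- The `k`-th elementary symmetric polynomial of `λ_1, …, λ_n`. -/
noncomputable def esymm (n k : ℕ) (lam : Fin n → ℝ) : ℝ :=
  ∑ s ∈ Finset.univ.powersetCard k, ∏ i ∈ s, lam i

open Finset

section ReverseCauchySchwarz

variable {R M : Type*} [Field R] [LinearOrder R] [IsStrictOrderedRing R] [AddCommGroup M]
  [Module R M]

theorem LinearMap.BilinForm.IsSymm.mul_le_sq_of_nonpos_on_orthogonal {B : LinearMap.BilinForm R M}
    (hB : B.IsSymm) {x : M} (hx : 0 < B x x) (hneg : ∀ w, B x w = 0 → B w w ≤ 0) (y : M) :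
    B x x * B y y ≤ B x y ^ 2 := by
  set w := B x x • y - B x y • x
  have hxw : B x w = 0 := by simp only [w, map_sub, map_smul, smul_eq_mul]; ring
  have hww : B w w = B x x * (B x x * B y y - B x y ^ 2) := by
    simp only [w, map_sub, map_smul, LinearMap.sub_apply, LinearMap.smul_apply, smul_eq_mul,
      hB.eq y x]
    ring
  nlinarith [hneg w hxw]

end ReverseCauchySchwarz

section OffDiagForm

variable (R : Type*) [CommRing R] (ι : Type*) [Fintype ι]

def offDiagForm : LinearMap.BilinForm R (ι → R) :=
  LinearMap.mk₂ R (fun x y => (∑ i, x i) * (∑ i, y i) - ∑ i, x i * y i)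
    (fun x x' y => by simp only [Pi.add_apply, add_mul, sum_add_distrib]; ring)
    (fun c x y => by simp only [Pi.smul_apply, smul_eq_mul, mul_assoc, ← mul_sum]; ring)
    (fun x y y' => by simp only [Pi.add_apply, mul_add, sum_add_distrib]; ring)
    (fun c x y => by simp only [Pi.smul_apply, smul_eq_mul, mul_left_comm _ c, ← mul_sum]; ring)

variable {R ι}

theorem offDiagForm_apply (x y : ι → R) :
    offDiagForm R ι x y = (∑ i, x i) * (∑ i, y i) - ∑ i, x i * y i := rfl

theorem offDiagForm_self (x : ι → R) :
    offDiagForm R ι x x = (∑ i, x i) ^ 2 - ∑ i, x i ^ 2 := by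
  simp only [offDiagForm_apply, sq]

theorem offDiagForm_self_eq_sum_erase [DecidableEq ι] (x : ι → R) :
    offDiagForm R ι x x = ∑ i, ∑ j ∈ univ.erase i, x i * x j := by
  simp only [offDiagForm_apply, sum_erase_eq_sub (mem_univ _), ← mul_sum, sum_sub_distrib,
    sum_mul]

theorem offDiagForm_isSymm : (offDiagForm R ι).IsSymm :=
  ⟨fun x y => by simp only [offDiagForm_apply, mul_comm]⟩

end OffDiagForm

section Lorentzian

variable {R ι : Type*} [Field R] [LinearOrder R] [IsStrictOrderedRing R] [Fintype ι]

theorem offDiagForm_self_nonpos_of_orthogonal {x w : ι → R} (hx : 0 < offDiagForm R ι x x)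
    (hxw : offDiagForm R ι x w = 0) : offDiagForm R ι w w ≤ 0 := by
  rw [offDiagForm_self] at hx ⊢
  have hcs := sum_mul_sq_le_sq_mul_sq univ x w
  rw [← sub_eq_zero.mp hxw] at hcs
  have hx2 : 0 ≤ ∑ i, x i ^ 2 := sum_nonneg fun i _ => sq_nonneg _
  have hw2 : 0 ≤ ∑ i, w i ^ 2 := sum_nonneg fun i _ => sq_nonneg _
  by_contra! hw
  nlinarith [mul_nonneg hx2 hw.le, mul_pos hx (hw2.trans_lt (sub_pos.mp hw))]

theorem offDiagForm_mul_le_sq_of_pos {x : ι → R} (hx : 0 < offDiagForm R ι x x) (y : ι → R) :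
    offDiagForm R ι x x * offDiagForm R ι y y ≤ offDiagForm R ι x y ^ 2 :=
  offDiagForm_isSymm.mul_le_sq_of_nonpos_on_orthogonal hx
    (fun _ => offDiagForm_self_nonpos_of_orthogonal hx) y

end Lorentzian

theorem esymm_eq_eval_esymm (n k : ℕ) (lam : Fin n → ℝ) :
    esymm n k lam = MvPolynomial.eval lam (MvPolynomial.esymm (Fin n) ℝ k) := by
  simp [esymm, MvPolynomial.esymm]

theorem esymm_one (n : ℕ) (lam : Fin n → ℝ) : esymm n 1 lam = ∑ i, lam i := by
  simp [esymm_eq_eval_esymm, MvPolynomial.esymm_one]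

theorem two_mul_esymm_two (n : ℕ) (lam : Fin n → ℝ) :
    2 * esymm n 2 lam = offDiagForm ℝ (Fin n) lam lam := by
  have newton := congrArg (MvPolynomial.eval lam) (MvPolynomial.mul_esymm_eq_sum (Fin n) ℝ 2)
  rw [show {a ∈ antidiagonal 2 | a.1 < 2} = {(0, 2), (1, 1)} by decide,
    sum_pair (by decide)] at newton
  simp only [MvPolynomial.psum, MvPolynomial.esymm_zero, MvPolynomial.esymm_one, map_mul, map_add,
    map_pow, map_neg, map_one, map_natCast, map_sum, MvPolynomial.eval_X, pow_one] at newton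
  rw [esymm_eq_eval_esymm, offDiagForm_self]
  linear_combination newton

theorem sum_esymm_one_sub_mul (n : ℕ) (lam v : Fin n → ℝ) :
    ∑ i, (esymm n 1 lam - lam i) * v i = offDiagForm ℝ (Fin n) lam v := by
  rw [esymm_one, offDiagForm_apply, sum_mul_sum, sum_comm]
  simp only [sub_mul, sum_sub_distrib, sum_mul]

theorem garding_quadratic_ineq_general (n : ℕ) (lam v : Fin n → ℝ)
    (h2 : 0 < esymm n 2 lam) :
    2 * esymm n 2 lam * (∑ i, ∑ j ∈ Finset.univ.erase i, v i * v j) ≤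
      (∑ i, (esymm n 1 lam - lam i) * v i) ^ 2 := by
  have hpos : 0 < offDiagForm ℝ (Fin n) lam lam := by rw [← two_mul_esymm_two]; positivity
  rw [two_mul_esymm_two, ← offDiagForm_self_eq_sum_erase, sum_esymm_one_sub_mul]
  exact offDiagForm_mul_le_sq_of_pos hpos v

/-- For `λ` in the Gårding cone `Γ₂` and any `v ∈ ℝ^n`,
`2 σ₂(λ) ∑_{i≠j} v_i v_j ≤ (∑_i (σ₁(λ) - λ_i) v_i)^2`. -/
theorem garding_quadratic_ineq (n : ℕ) (hn : 2 ≤ n) (lam v : Fin n → ℝ)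
    (h1 : 0 < esymm n 1 lam) (h2 : 0 < esymm n 2 lam) :
    2 * esymm n 2 lam * (∑ i, ∑ j ∈ Finset.univ.erase i, v i * v j) ≤
      (∑ i, (esymm n 1 lam - lam i) * v i) ^ 2 :=
  garding_quadratic_ineq_general n lam v h2
end

section
/- For every n ≥ 2 there exists a constant C(n) > 0 such that for all λ ∈ ℝ^n lying in the Gårding cone Γ₂ (σ₁(λ) > 0 and σ₂(λ) > 0), one has σ₁(λ)σ₂(λ) − 3σ₃(λ) ≥ C(n) · σ₂(λ)^{3/2}. -/
open Finset

namespace MvPolynomial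

variable (σ : Type*) [Fintype σ] (R : Type*) [CommRing R]

theorem two_mul_esymm_two : 2 * esymm σ R 2 = psum σ R 1 ^ 2 - psum σ R 2 := by
  rw [show (2 : MvPolynomial σ R) = (2 : ℕ) by norm_num, mul_esymm_eq_sum, sum_filter,
    Nat.sum_antidiagonal_eq_sum_range_succ_mk]
  simp only [sum_range_succ, sum_range_zero, esymm_zero, esymm_one, ← psum_one, Nat.reduceLT,
    Nat.reduceSub, reduceIte]
  ring

theorem three_mul_esymm_three :
    3 * esymm σ R 3 = esymm σ R 2 * psum σ R 1 - psum σ R 1 * psum σ R 2 + psum σ R 3 := by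
  rw [show (3 : MvPolynomial σ R) = (3 : ℕ) by norm_num, mul_esymm_eq_sum, sum_filter,
    Nat.sum_antidiagonal_eq_sum_range_succ_mk]
  simp only [sum_range_succ, sum_range_zero, esymm_zero, esymm_one, ← psum_one, Nat.reduceLT,
    Nat.reduceSub, reduceIte]
  ring

theorem eval_psum {S : Type*} [CommSemiring S] (f : σ → S) (k : ℕ) :
    eval f (psum σ S k) = ∑ i, f i ^ k := by
  simp [psum]

end MvPolynomial

section Esymm

variable {n : ℕ} (lam : Fin n → ℝ)

theorem esymm_eq_eval (k : ℕ) :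
    esymm n k lam = MvPolynomial.eval lam (MvPolynomial.esymm (Fin n) ℝ k) := by
  simp [esymm, MvPolynomial.esymm]

theorem esymm_one_eq_sum : esymm n 1 lam = ∑ i, lam i := by
  simp [esymm_eq_eval]

theorem two_mul_esymm_two_eq : 2 * esymm n 2 lam = esymm n 1 lam ^ 2 - ∑ i, lam i ^ 2 := by
  have newton := congrArg (MvPolynomial.eval lam) (MvPolynomial.two_mul_esymm_two (Fin n) ℝ)
  simp only [map_mul, map_sub, map_pow, map_ofNat, MvPolynomial.eval_psum, pow_one,
    ← esymm_eq_eval] at newton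
  rwa [esymm_one_eq_sum]

theorem esymm_one_mul_esymm_two_sub_three_mul_esymm_three :
    esymm n 1 lam * esymm n 2 lam - 3 * esymm n 3 lam =
      ∑ i, lam i ^ 2 * (esymm n 1 lam - lam i) := by
  have newton := congrArg (MvPolynomial.eval lam) (MvPolynomial.three_mul_esymm_three (Fin n) ℝ)
  simp only [map_mul, map_add, map_sub, map_ofNat, MvPolynomial.eval_psum, pow_one,
    ← esymm_eq_eval] at newton
  simp only [esymm_one_eq_sum, mul_sub, sum_sub_distrib, ← sum_mul, ← pow_succ]
  linear_combination -newton

theorem two_mul_esymm_two_le_sq : 2 * esymm n 2 lam ≤ esymm n 1 lam ^ 2 := by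
  linarith [two_mul_esymm_two_eq lam, sum_nonneg fun i (_ : i ∈ univ) ↦ sq_nonneg (lam i)]

theorem esymm_two_le_esymm_one_mul_sub (i : Fin n) :
    esymm n 2 lam ≤ esymm n 1 lam * (esymm n 1 lam - lam i) := by
  have hi : lam i ^ 2 ≤ ∑ j, lam j ^ 2 :=
    single_le_sum (fun j _ ↦ sq_nonneg (lam j)) (mem_univ i)
  nlinarith [two_mul_esymm_two_eq lam, sq_nonneg (esymm n 1 lam - lam i)]

theorem esymm_one_mul_esymm_two_le_card_mul (h1 : 0 < esymm n 1 lam) (h2 : 0 ≤ esymm n 2 lam) :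
    esymm n 1 lam * esymm n 2 lam ≤ n * (esymm n 1 lam * esymm n 2 lam - 3 * esymm n 3 lam) := by
  have weighted : esymm n 2 lam * ∑ i, lam i ^ 2 ≤
      esymm n 1 lam * (esymm n 1 lam * esymm n 2 lam - 3 * esymm n 3 lam) := by
    rw [esymm_one_mul_esymm_two_sub_three_mul_esymm_three, mul_sum, mul_sum]
    refine sum_le_sum fun i _ ↦ ?_
    nlinarith [esymm_two_le_esymm_one_mul_sub lam i, sq_nonneg (lam i)]
  have cauchy_schwarz : esymm n 1 lam ^ 2 ≤ n * ∑ i, lam i ^ 2 := by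
    simpa [esymm_one_eq_sum] using sq_sum_le_card_mul_sum_sq (s := univ) (f := lam)
  refine le_of_mul_le_mul_left ?_ h1
  calc esymm n 1 lam * (esymm n 1 lam * esymm n 2 lam)
      = esymm n 1 lam ^ 2 * esymm n 2 lam := by ring
    _ ≤ n * (∑ i, lam i ^ 2) * esymm n 2 lam := by gcongr
    _ = n * (esymm n 2 lam * ∑ i, lam i ^ 2) := by ring
    _ ≤ n * (esymm n 1 lam * (esymm n 1 lam * esymm n 2 lam - 3 * esymm n 3 lam)) := by gcongr
    _ = esymm n 1 lam * (n * (esymm n 1 lam * esymm n 2 lam - 3 * esymm n 3 lam)) := by ring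

end Esymm

/-- For every `n ≥ 2` there is a constant `C(n) > 0` such that for all `λ` in the
Gårding cone `Γ₂`, `σ₁(λ)σ₂(λ) - 3σ₃(λ) ≥ C(n) σ₂(λ)^{3/2}`. -/
theorem sigma1_sigma2_sub_three_sigma3_lower_bound (n : ℕ) (hn : 2 ≤ n) :
    ∃ C : ℝ, 0 < C ∧ ∀ lam : Fin n → ℝ, 0 < esymm n 1 lam → 0 < esymm n 2 lam →
      esymm n 1 lam * esymm n 2 lam - 3 * esymm n 3 lam ≥
        C * esymm n 2 lam ^ ((3 : ℝ) / 2) := by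
  have hn_pos : (0 : ℝ) < n := by exact_mod_cast (by omega : 0 < n)
  refine ⟨√2 / n, by positivity, fun lam h1 h2 ↦ ?_⟩
  have hroot : √2 * √(esymm n 2 lam) ≤ esymm n 1 lam := by
    rw [← Real.sqrt_mul zero_le_two, Real.sqrt_le_left h1.le]
    exact two_mul_esymm_two_le_sq lam
  have hpow : esymm n 2 lam ^ ((3 : ℝ) / 2) = √(esymm n 2 lam) * esymm n 2 lam := by
    rw [Real.sqrt_eq_rpow, ← Real.rpow_add_one h2.ne']
    norm_num
  rw [ge_iff_le, hpow, div_mul_eq_mul_div, div_le_iff₀ hn_pos]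
  calc √2 * (√(esymm n 2 lam) * esymm n 2 lam)
      = √2 * √(esymm n 2 lam) * esymm n 2 lam := by ring
    _ ≤ esymm n 1 lam * esymm n 2 lam := by gcongr
    _ ≤ _ := by linarith [esymm_one_mul_esymm_two_le_card_mul lam h1 h2.le]
end

section
/- Let E = EuclideanSpace ℝ (Fin n). Let ψ_{ij} : E → ℝ (i, j ∈ Fin n) be C¹ functions with ψ_{ij} = ψ_{ji} and Σ_j ∂_j ψ_{ij} = 0 everywhere for each i, and let f : E → ℝ be C¹. For a C² function w : E → ℝ define □_{ψ,f} w := Σ_{i,j} ψ_{ij} ∂²_{ij} w − Σ_{i,j} ψ_{ij} (∂_i f)(∂_j w). Then for all C² compactly supported functions u, v : E → ℝ, ∫_E (□_{ψ,f} u)(x) · v(x) · e^{−f(x)} dx = −∫_E Σ_{i,j} ψ_{ij}(x) (∂_i u)(x) (∂_j v)(x) e^{−f(x)} dx (integration with respect to Lebesgue measure); in particular ∫_E (□_{ψ,f} u) v e^{−f} dx = ∫_E u (□_{ψ,f} v) e^{−f} dx, i.e. □_{ψ,f} is self-adjoint with respect to the weighted measure e^{−f} dx. -/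
/-!
Integration by parts against the weight `e^{-f}`. For `F_{ij} = ψ_{ij} (∂_i u) v e^{-f}`, the
product rule together with `∑_j ∂_j ψ_{ij} = 0` and the symmetry of `ψ` gives
`∑_{i,j} ∂_j F_{ij} = (□_{ψ,f} u) v e^{-f} + ∑_{i,j} ψ_{ij} (∂_i u)(∂_j v) e^{-f}`,
and the left-hand side integrates to zero because each `F_{ij}` is `C¹` with compact support.
The right-hand side of the resulting identity is symmetric in `u` and `v`, which gives
self-adjointness.
-/

open MeasureTheory

/-- Directional derivative of `g` at `x` along the `k`-th standard basis vector. -/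
noncomputable def pd {n : ℕ} (g : EuclideanSpace ℝ (Fin n) → ℝ) (k : Fin n)
    (x : EuclideanSpace ℝ (Fin n)) : ℝ :=
  fderiv ℝ g x (EuclideanSpace.single k 1)

/-- Second directional derivative `∂²_{ij} w` at `x`. -/
noncomputable def pd2 {n : ℕ} (w : EuclideanSpace ℝ (Fin n) → ℝ) (i j : Fin n)
    (x : EuclideanSpace ℝ (Fin n)) : ℝ :=
  fderiv ℝ (fun y => fderiv ℝ w y (EuclideanSpace.single i 1)) x
    (EuclideanSpace.single j 1)

/-- The operator `□_{ψ,f} w = ∑_{i,j} ψ_{ij} ∂²_{ij} w - ∑_{i,j} ψ_{ij} (∂_i f)(∂_j w)`. -/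
noncomputable def boxOp {n : ℕ} (ψ : Fin n → Fin n → EuclideanSpace ℝ (Fin n) → ℝ)
    (f w : EuclideanSpace ℝ (Fin n) → ℝ) (x : EuclideanSpace ℝ (Fin n)) : ℝ :=
  (∑ i, ∑ j, ψ i j x * pd2 w i j x) - ∑ i, ∑ j, ψ i j x * pd f i x * pd w j x


open Finset

section IntegralFDeriv

variable {E : Type*} [NormedAddCommGroup E] [NormedSpace ℝ E] [FiniteDimensional ℝ E]
  [MeasurableSpace E] [BorelSpace E] (μ : Measure E) [μ.IsAddHaarMeasure]

theorem integral_fderiv_apply_eq_zero_of_hasCompactSupport {g : E → ℝ} (hg : ContDiff ℝ 1 g)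
    (hg' : HasCompactSupport g) (v : E) : ∫ x, fderiv ℝ g x v ∂μ = 0 := by
  have hg'v : Continuous (fun x => fderiv ℝ g x v) :=
    (hg.continuous_fderiv one_ne_zero).clm_apply continuous_const
  have key := integral_mul_fderiv_eq_neg_fderiv_mul_of_integrable (μ := μ) (v := v)
    (f := fun _ => (1 : ℝ)) (g := g) (by simp)
    (by simpa using hg'v.integrable_of_hasCompactSupport (hg'.fderiv_apply ℝ v))
    (by simpa using hg.continuous.integrable_of_hasCompactSupport hg')
    (fun _ _ => differentiableAt_const _) (fun x _ => hg.differentiable one_ne_zero x)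
  simpa using key

end IntegralFDeriv

theorem sum_sum_mul_mul_comm_of_symm {ι R : Type*} [Fintype ι] [CommSemiring R]
    {A : ι → ι → R} (hA : ∀ i j, A i j = A j i) (a b : ι → R) :
    ∑ i, ∑ j, A i j * a i * b j = ∑ i, ∑ j, A i j * b i * a j := by
  rw [Finset.sum_comm]
  refine sum_congr rfl fun i _ => sum_congr rfl fun j _ => ?_
  rw [hA]; ring

section PartialDerivatives

variable {n : ℕ}

theorem contDiff_pd {m k : WithTop ℕ∞} {G : EuclideanSpace ℝ (Fin n) → ℝ}
    (hG : ContDiff ℝ k G) (hmk : m + 1 ≤ k) (i : Fin n) : ContDiff ℝ m (pd G i) :=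
  (hG.fderiv_right hmk).clm_apply contDiff_const

theorem continuous_pd {k : WithTop ℕ∞} {G : EuclideanSpace ℝ (Fin n) → ℝ}
    (hG : ContDiff ℝ k G) (hk : 1 ≤ k) (i : Fin n) : Continuous (pd G i) :=
  (contDiff_pd (m := 0) hG (by simpa using hk) i).continuous

theorem pd_mul {a b : EuclideanSpace ℝ (Fin n) → ℝ} {x : EuclideanSpace ℝ (Fin n)}
    (ha : DifferentiableAt ℝ a x) (hb : DifferentiableAt ℝ b x) (k : Fin n) :
    pd (fun y => a y * b y) k x = pd a k x * b x + a x * pd b k x := by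
  simp only [pd, fderiv_fun_mul ha hb, add_apply, smul_apply, smul_eq_mul]
  ring

theorem pd_exp_neg {f : EuclideanSpace ℝ (Fin n) → ℝ} {x : EuclideanSpace ℝ (Fin n)}
    (hf : DifferentiableAt ℝ f x) (k : Fin n) :
    pd (fun y => Real.exp (-f y)) k x = -pd f k x * Real.exp (-f x) := by
  rw [pd, fderiv_exp (f := fun y => -f y) hf.neg, fderiv_fun_neg]
  simp only [smul_apply, neg_apply, smul_eq_mul, pd]
  ring

theorem pd_pd (w : EuclideanSpace ℝ (Fin n) → ℝ) (i j : Fin n) (x : EuclideanSpace ℝ (Fin n)) :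
    pd (pd w i) j x = pd2 w i j x :=
  rfl

theorem pd_eq_zero_of_notMem_tsupport {G : EuclideanSpace ℝ (Fin n) → ℝ}
    {x : EuclideanSpace ℝ (Fin n)} (hx : x ∉ tsupport G) (k : Fin n) : pd G k x = 0 := by
  simp [pd, fderiv_of_notMem_tsupport ℝ hx]

end PartialDerivatives

section WeightedFlux

variable {n : ℕ} {ψ : Fin n → Fin n → EuclideanSpace ℝ (Fin n) → ℝ}
  {f u v : EuclideanSpace ℝ (Fin n) → ℝ}

noncomputable def weightedFlux (ψ : Fin n → Fin n → EuclideanSpace ℝ (Fin n) → ℝ)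
    (f u v : EuclideanSpace ℝ (Fin n) → ℝ) (i j : Fin n) : EuclideanSpace ℝ (Fin n) → ℝ :=
  fun y => ψ i j y * pd u i y * v y * Real.exp (-f y)

theorem pd_weightedFlux {x : EuclideanSpace ℝ (Fin n)} {i j : Fin n}
    (hψ : DifferentiableAt ℝ (ψ i j) x) (hu : DifferentiableAt ℝ (pd u i) x)
    (hv : DifferentiableAt ℝ v x) (hf : DifferentiableAt ℝ f x) :
    pd (weightedFlux ψ f u v i j) j x =
      pd (ψ i j) j x * (pd u i x * v x * Real.exp (-f x))
        + (ψ i j x * pd2 u i j x - ψ i j x * pd u i x * pd f j x) * (v x * Real.exp (-f x))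
        + ψ i j x * pd u i x * pd v j x * Real.exp (-f x) := by
  unfold weightedFlux
  rw [pd_mul (a := fun y => ψ i j y * pd u i y * v y) (b := fun y => Real.exp (-f y))
      ((hψ.mul hu).mul hv) hf.neg.exp,
    pd_mul (a := fun y => ψ i j y * pd u i y) (hψ.mul hu) hv, pd_mul hψ hu, pd_exp_neg hf, pd_pd]
  ring

theorem sum_pd_weightedFlux (hψ : ∀ i j, Differentiable ℝ (ψ i j))
    (hsymm : ∀ i j x, ψ i j x = ψ j i x) (hdiv : ∀ i x, ∑ j, pd (ψ i j) j x = 0)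
    (hf : Differentiable ℝ f) (hu : ∀ i, Differentiable ℝ (pd u i)) (hv : Differentiable ℝ v)
    (x : EuclideanSpace ℝ (Fin n)) :
    ∑ i, ∑ j, pd (weightedFlux ψ f u v i j) j x =
      boxOp ψ f u x * v x * Real.exp (-f x)
        + (∑ i, ∑ j, ψ i j x * pd u i x * pd v j x) * Real.exp (-f x) := by
  have hdiv_term : ∑ i, ∑ j, pd (ψ i j) j x * (pd u i x * v x * Real.exp (-f x)) = 0 := by
    simp [← sum_mul, hdiv]
  simp only [pd_weightedFlux (hψ _ _ _) (hu _ _) (hv x) (hf x), sum_add_distrib]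
  rw [hdiv_term, zero_add, boxOp,
    sum_sum_mul_mul_comm_of_symm (hsymm · · x) (pd f · x) (pd u · x)]
  simp only [← sum_mul, sum_sub_distrib]
  ring

theorem contDiff_weightedFlux (hψ : ∀ i j, ContDiff ℝ 1 (ψ i j)) (hf : ContDiff ℝ 1 f)
    (hu : ContDiff ℝ 2 u) (hv : ContDiff ℝ 1 v) (i j : Fin n) :
    ContDiff ℝ 1 (weightedFlux ψ f u v i j) :=
  (((hψ i j).mul (contDiff_pd hu (by norm_num) i)).mul hv).mul hf.neg.exp

theorem hasCompactSupport_weightedFlux (hv : HasCompactSupport v) (i j : Fin n) :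
    HasCompactSupport (weightedFlux ψ f u v i j) :=
  hv.mul_left.mul_right

theorem integral_boxOp_mul_exp_neg (hψ : ∀ i j, ContDiff ℝ 1 (ψ i j))
    (hsymm : ∀ i j x, ψ i j x = ψ j i x) (hdiv : ∀ i x, ∑ j, pd (ψ i j) j x = 0)
    (hf : ContDiff ℝ 1 f) (hu : ContDiff ℝ 2 u) (hv : ContDiff ℝ 1 v)
    (hv' : HasCompactSupport v) :
    ∫ x, boxOp ψ f u x * v x * Real.exp (-f x) =
      -∫ x, (∑ i, ∑ j, ψ i j x * pd u i x * pd v j x) * Real.exp (-f x) := by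
  have hdu : ∀ i, ContDiff ℝ 1 (pd u i) := contDiff_pd hu (by norm_num)
  have hflux := contDiff_weightedFlux hψ hf hu hv
  have hflux_supp : ∀ i j, HasCompactSupport (weightedFlux ψ f u v i j) :=
    hasCompactSupport_weightedFlux hv'
  have hflux_int : ∀ i j, Integrable (pd (weightedFlux ψ f u v i j) j) := fun i j =>
    (continuous_pd (hflux i j) le_rfl j).integrable_of_hasCompactSupport
      ((hflux_supp i j).fderiv_apply ℝ _)
  have hdiv_int : Integrable fun x => ∑ i, ∑ j, pd (weightedFlux ψ f u v i j) j x :=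
    integrable_finsetSum _ fun i _ => integrable_finsetSum _ fun j _ => hflux_int i j
  have hdiv_zero : ∫ x, ∑ i, ∑ j, pd (weightedFlux ψ f u v i j) j x = 0 := by
    rw [integral_finsetSum _ fun i _ => integrable_finsetSum _ fun j _ => hflux_int i j]
    refine sum_eq_zero fun i _ => ?_
    rw [integral_finsetSum _ fun j _ => hflux_int i j]
    exact sum_eq_zero fun j _ =>
      integral_fderiv_apply_eq_zero_of_hasCompactSupport volume (hflux i j) (hflux_supp i j) _
  have hgrad_int :
      Integrable fun x => (∑ i, ∑ j, ψ i j x * pd u i x * pd v j x) * Real.exp (-f x) := by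
    have hψc : ∀ i j, Continuous (ψ i j) := fun i j => (hψ i j).continuous
    have hduc : ∀ i, Continuous (pd u i) := fun i => (hdu i).continuous
    have hdvc : ∀ j, Continuous (pd v j) := fun j => continuous_pd hv le_rfl j
    refine Continuous.integrable_of_hasCompactSupport (by fun_prop)
      (hv'.mono' (Function.support_subset_iff'.2 fun x hx => ?_))
    simp [pd_eq_zero_of_notMem_tsupport hx]
  have hsplit := sum_pd_weightedFlux (fun i j => (hψ i j).differentiable one_ne_zero) hsymm hdiv
    (hf.differentiable one_ne_zero) (fun i => (hdu i).differentiable one_ne_zero)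
    (hv.differentiable one_ne_zero)
  calc ∫ x, boxOp ψ f u x * v x * Real.exp (-f x)
      = ∫ x, (∑ i, ∑ j, pd (weightedFlux ψ f u v i j) j x)
          - (∑ i, ∑ j, ψ i j x * pd u i x * pd v j x) * Real.exp (-f x) := by
        congr 1 with x
        rw [hsplit]
        ring
    _ = -∫ x, (∑ i, ∑ j, ψ i j x * pd u i x * pd v j x) * Real.exp (-f x) := by
        rw [integral_sub hdiv_int hgrad_int, hdiv_zero, zero_sub]

end WeightedFlux

/-- If `ψ` is a symmetric, divergence-free `C¹` tensor and `f` is `C¹`, then for all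
compactly supported `C²` functions `u, v`,
`∫ (□_{ψ,f} u) v e^{-f} = -∫ ∑_{i,j} ψ_{ij} (∂_i u)(∂_j v) e^{-f}`;
in particular `□_{ψ,f}` is self-adjoint with respect to `e^{-f} dx`. -/
theorem boxOp_self_adjoint (n : ℕ)
    (ψ : Fin n → Fin n → EuclideanSpace ℝ (Fin n) → ℝ)
    (hψ : ∀ i j, ContDiff ℝ 1 (ψ i j))
    (hsymm : ∀ i j x, ψ i j x = ψ j i x)
    (hdiv : ∀ i x, ∑ j, pd (ψ i j) j x = 0)
    (f : EuclideanSpace ℝ (Fin n) → ℝ) (hf : ContDiff ℝ 1 f)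
    (u v : EuclideanSpace ℝ (Fin n) → ℝ)
    (hu : ContDiff ℝ 2 u) (hv : ContDiff ℝ 2 v)
    (hu' : HasCompactSupport u) (hv' : HasCompactSupport v) :
    (∫ x, boxOp ψ f u x * v x * Real.exp (-f x)) =
        -∫ x, (∑ i, ∑ j, ψ i j x * pd u i x * pd v j x) * Real.exp (-f x) ∧
      (∫ x, boxOp ψ f u x * v x * Real.exp (-f x)) =
        ∫ x, u x * boxOp ψ f v x * Real.exp (-f x) := by
  have huv := integral_boxOp_mul_exp_neg hψ hsymm hdiv hf hu (hv.of_le one_le_two) hv'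
  have hvu := integral_boxOp_mul_exp_neg hψ hsymm hdiv hf hv (hu.of_le one_le_two) hu'
  refine ⟨huv, ?_⟩
  calc ∫ x, boxOp ψ f u x * v x * Real.exp (-f x)
      = ∫ x, boxOp ψ f v x * u x * Real.exp (-f x) := by
        rw [huv, hvu, neg_inj]
        congr 1 with x
        rw [sum_sum_mul_mul_comm_of_symm (hsymm · · x)]
    _ = ∫ x, u x * boxOp ψ f v x * Real.exp (-f x) := by
        congr 1 with x
        ring
end

section
/- Let (X, d) be a metric space with a Borel measure μ, let x₀ ∈ X, and suppose there exist constants C > 0 and n ≥ 1 such that μ(B(x₀, r)) ≤ C(1 + r)^n for every r > 0 (polynomial volume growth). Let f : X → ℝ be a measurable function satisfying f(x) ≥ (1/4)·(max(d(x, x₀) − 5n, 0))² for all x ∈ X. Then for every measurable function u : X → ℝ for which there exist constants A > 0 and 0 ≤ α < 1/4 with |u(x)| ≤ A·e^{α d(x,x₀)²} for all x, the function x ↦ |u(x)| e^{−f(x)} is integrable with respect to μ; in particular ∫_X e^{−f} dμ < ∞. -/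
/-!
Since `α < 1/4`, the Gaussian decay `e^{-(d - 5n)₊²/4}` beats the growth `e^{α d²}` of `u`
with room to spare: `α d² - (d - 5n)₊²/4 ≤ c - d` for some constant `c`, where `d = d(x, x₀)`.
Hence `|u| e^{-f} ≤ A e^c e^{-d}`, and `e^{-d}` is integrable against a measure of polynomial
volume growth: it is at most `e^{-k}` on the ball of radius `k + 1` around `x₀` for `k = ⌊d⌋`,
and `∑ₖ e^{-k} C (k + 2)^n < ∞`.
-/

open MeasureTheory Real

lemma sq_sub_two_mul_le_max_sub_zero_sq {a t : ℝ} (ha : 0 ≤ a) (ht : 0 ≤ t) :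
    t ^ 2 - 2 * a * t ≤ max (t - a) 0 ^ 2 := by
  rcases le_total t a with h | h
  · rw [max_eq_right (by linarith)]; nlinarith
  · rw [max_eq_left (by linarith)]; nlinarith

lemma exists_mul_sq_sub_max_sub_zero_sq_le {α : ℝ} (hα : α < 1 / 4) {a : ℝ} (ha : 0 ≤ a) :
    ∃ c, ∀ t, 0 ≤ t → α * t ^ 2 - 1 / 4 * max (t - a) 0 ^ 2 ≤ c - t := by
  have hδ : 0 < 1 / 4 - α := by linarith
  -- `(1 + a/2) t - (1/4 - α) t²` is maximal at `t = (1 + a/2) / (2 (1/4 - α))`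
  refine ⟨(1 + a / 2) ^ 2 / (4 * (1 / 4 - α)), fun t ht => ?_⟩
  have hquad :
      (1 + a / 2) * t - (1 / 4 - α) * t ^ 2 ≤ (1 + a / 2) ^ 2 / (4 * (1 / 4 - α)) := by
    rw [le_div_iff₀ (by positivity)]
    nlinarith [sq_nonneg (2 * (1 / 4 - α) * t - (1 + a / 2))]
  linarith [sq_sub_two_mul_le_max_sub_zero_sq ha ht]

lemma abs_mul_exp_neg_le_of_le {α a c : ℝ}
    (hc : ∀ t, 0 ≤ t → α * t ^ 2 - 1 / 4 * max (t - a) 0 ^ 2 ≤ c - t) {A u f d : ℝ}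
    (hA : 0 ≤ A) (hd : 0 ≤ d) (hu : |u| ≤ A * exp (α * d ^ 2))
    (hf : 1 / 4 * max (d - a) 0 ^ 2 ≤ f) :
    |u| * exp (-f) ≤ A * exp c * exp (-d) :=
  calc |u| * exp (-f) ≤ A * exp (α * d ^ 2) * exp (-(1 / 4 * max (d - a) 0 ^ 2)) := by gcongr
    _ = A * exp (α * d ^ 2 - 1 / 4 * max (d - a) 0 ^ 2) := by rw [exp_sub, exp_neg]; ring
    _ ≤ A * exp (c - d) := by gcongr A * exp ?_; exact hc d hd
    _ = A * exp c * exp (-d) := by rw [exp_sub, exp_neg]; ring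

lemma ofReal_exp_neg_dist_le_tsum_indicator_ball {X : Type*} [PseudoMetricSpace X]
    (x₀ x : X) :
    ENNReal.ofReal (exp (-dist x x₀)) ≤
      ∑' k : ℕ, (Metric.ball x₀ (k + 1)).indicator (fun _ => ENNReal.ofReal (exp (-k))) x := by
  refine le_trans ?_ (ENNReal.le_tsum ⌊dist x x₀⌋₊)
  have hx : x ∈ Metric.ball x₀ (⌊dist x x₀⌋₊ + 1) :=
    Metric.mem_ball.2 (Nat.lt_floor_add_one _)
  rw [Set.indicator_of_mem hx]
  gcongr
  exact Nat.floor_le dist_nonneg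

lemma summable_exp_neg_mul_add_two_pow (C : ℝ) (n : ℕ) :
    Summable fun k : ℕ => exp (-k) * (C * ((k : ℝ) + 2) ^ n) := by
  have h := ((summable_pow_mul_exp_neg_nat_mul n one_pos).mul_left (exp 2 * C)).comp_injective
    (add_left_injective 2)
  refine h.congr fun k => ?_
  simp only [Function.comp_apply, Nat.cast_add, Nat.cast_ofNat, neg_mul, one_mul]
  rw [show -((k : ℝ) + 2) = -k + -2 by ring, exp_add, exp_neg 2]
  field_simp

lemma integrable_exp_neg_dist_of_measure_ball_le {X : Type*} [PseudoMetricSpace X]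
    [MeasurableSpace X] [OpensMeasurableSpace X] {μ : Measure X} {x₀ : X} {C : ℝ} {n : ℕ}
    (hvol : ∀ r : ℝ, 0 < r → μ (Metric.ball x₀ r) ≤ ENNReal.ofReal (C * (1 + r) ^ n)) :
    Integrable (fun x => exp (-dist x x₀)) μ := by
  refine ⟨(continuous_id.dist continuous_const).neg.rexp.aestronglyMeasurable, ?_⟩
  rw [hasFiniteIntegral_iff_ofReal (.of_forall fun x => (exp_pos _).le)]
  have hball : ∀ k : ℕ, μ (Metric.ball x₀ (k + 1)) ≤ ENNReal.ofReal (C * ((k : ℝ) + 2) ^ n) := by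
    intro k
    convert hvol (k + 1) (by positivity) using 3
    ring
  calc ∫⁻ x, ENNReal.ofReal (exp (-dist x x₀)) ∂μ
      ≤ ∫⁻ x, ∑' k : ℕ,
          (Metric.ball x₀ (k + 1)).indicator (fun _ => ENNReal.ofReal (exp (-k))) x ∂μ :=
        lintegral_mono (ofReal_exp_neg_dist_le_tsum_indicator_ball x₀)
    _ = ∑' k : ℕ, ENNReal.ofReal (exp (-k)) * μ (Metric.ball x₀ (k + 1)) := by
        rw [lintegral_tsum fun k => (measurable_const.indicator measurableSet_ball).aemeasurable]
        simp only [lintegral_indicator measurableSet_ball, setLIntegral_const]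
    _ ≤ ∑' k : ℕ, ENNReal.ofReal (exp (-k) * (C * ((k : ℝ) + 2) ^ n)) := by
        gcongr with k
        rw [ENNReal.ofReal_mul (exp_pos _).le]
        exact mul_le_mul_right (hball k) _
    _ < ⊤ := (ENNReal.tsum_coe_ne_top_iff_summable.2
        (summable_exp_neg_mul_add_two_pow C n).toNNReal).lt_top

theorem integrable_of_gaussian_weight_general {X : Type*} [MetricSpace X]
    [MeasurableSpace X] [BorelSpace X] (μ : Measure X) (x₀ : X)
    (C : ℝ) (n : ℕ)
    (hvol : ∀ r : ℝ, 0 < r → μ (Metric.ball x₀ r) ≤ ENNReal.ofReal (C * (1 + r) ^ n))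
    (f : X → ℝ) (hf : Measurable f)
    (hlb : ∀ x, f x ≥ (1 / 4) * max (dist x x₀ - 5 * n) 0 ^ 2) :
    (∀ u : X → ℝ, Measurable u →
        (∃ A α : ℝ, 0 < A ∧ 0 ≤ α ∧ α < 1 / 4 ∧
          ∀ x, |u x| ≤ A * Real.exp (α * dist x x₀ ^ 2)) →
        Integrable (fun x => |u x| * Real.exp (-f x)) μ) ∧
      Integrable (fun x => Real.exp (-f x)) μ := by
  have hexp := integrable_exp_neg_dist_of_measure_ball_le hvol
  have hweighted : ∀ (u : X → ℝ) (A α : ℝ), Measurable u → 0 ≤ A → α < 1 / 4 →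
      (∀ x, |u x| ≤ A * exp (α * dist x x₀ ^ 2)) →
      Integrable (fun x => |u x| * exp (-f x)) μ := by
    intro u A α hu hA hα hub
    obtain ⟨c, hc⟩ := exists_mul_sq_sub_max_sub_zero_sq_le hα (a := 5 * n) (by positivity)
    refine (hexp.const_mul (A * exp c)).mono' (hu.abs.mul hf.neg.exp).aestronglyMeasurable
      (.of_forall fun x => ?_)
    rw [Real.norm_of_nonneg (by positivity)]
    exact abs_mul_exp_neg_le_of_le hc hA dist_nonneg (hub x) (hlb x)
  refine ⟨fun u hu ⟨A, α, hA, _, hα, hub⟩ => hweighted u A α hu hA.le hα hub, ?_⟩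
  simpa using hweighted 1 1 0 measurable_const zero_le_one (by norm_num) (by simp)

/-- On a metric measure space with polynomial volume growth
`μ(B(x₀,r)) ≤ C (1+r)^n`, if `f(x) ≥ (1/4) (d(x,x₀) - 5n)₊²`, then every measurable
`u` with `|u(x)| ≤ A e^{α d(x,x₀)²}` for some `0 ≤ α < 1/4` has
`|u| e^{-f}` integrable; in particular `∫ e^{-f} dμ < ∞`. -/
theorem integrable_of_gaussian_weight {X : Type*} [MetricSpace X]
    [MeasurableSpace X] [BorelSpace X] (μ : Measure X) (x₀ : X)
    (C : ℝ) (hC : 0 < C) (n : ℕ) (hn : 1 ≤ n)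
    (hvol : ∀ r : ℝ, 0 < r → μ (Metric.ball x₀ r) ≤ ENNReal.ofReal (C * (1 + r) ^ n))
    (f : X → ℝ) (hf : Measurable f)
    (hlb : ∀ x, f x ≥ (1 / 4) * max (dist x x₀ - 5 * n) 0 ^ 2) :
    (∀ u : X → ℝ, Measurable u →
        (∃ A α : ℝ, 0 < A ∧ 0 ≤ α ∧ α < 1 / 4 ∧
          ∀ x, |u x| ≤ A * Real.exp (α * dist x x₀ ^ 2)) →
        Integrable (fun x => |u x| * Real.exp (-f x)) μ) ∧
      Integrable (fun x => Real.exp (-f x)) μ :=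
  integrable_of_gaussian_weight_general μ x₀ C n hvol f hf hlb
end
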